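/- Let w ∈ W and let γ be a maximal inversion of w, i.e. γ ∈ inv(w) = {α ∈ Φ⁺ : w⁻¹α ∈ Φ⁻} and no α ∈ inv(w) satisfies γ < α (meaning α − γ is a nonzero sum of positive roots). Then −w⁻¹γ is a quantum root and ℓ(w s_{−w⁻¹γ}) = ℓ(w) − ℓ(s_{−w⁻¹γ}); equivalently, w → s_γ w is a quantum edge in the quantum Bruhat graph. -/

import Mathlib

/-!
Put `β = -w⁻¹γ`, so that `w β = -γ`. For `α ∈ inv(s_β)` write `⟨β^∨, α⟩ = k + 1` with `k ≥ 0`;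
then `α' = -s_β α = (k + 1)β - α` also lies in `inv(s_β)` and `w α + w α' + (k + 1)γ = 0`.
If `w α` were positive, `w α'` would be negative and `-w α'` an inversion of `w` with
`-w α' - γ = w α + kγ` a sum of positive roots, contradicting the maximality of `γ`. So `w` sends
every root of `inv(s_β)` to a negative root, which gives `ℓ(w) = ℓ(w s_β) + ℓ(s_β)`. If `k ≥ 1` and `α ≠ β`, then `α - β` and
`α' - β` are roots, and maximality again makes their images `w α + γ`, `w α' + γ` positive,
although with `(k - 1)γ` they sum to zero. Hence `⟨β^∨, α⟩ = 1` on `inv(s_β) \ {β}`, and as the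
positive roots outside `inv(s_β)` cancel in pairs in `⟨β^∨, 2ρ⟩`, we get
`⟨β^∨, 2ρ⟩ = 2 + (ℓ(s_β) - 1)`.

The two facts about root systems used (a positive root plus a sum of positive roots is never
zero; `α - β ∈ Φ` when `⟨β^∨, α⟩ > 0` and `α ≠ β`) come from the invariant form
`(x, y) ↦ Σ_{δ ∈ Φ} ⟨δ^∨, x⟩⟨δ^∨, y⟩`.
-/

open Classical

/-- A reduced crystallographic root system with a chosen positive system,
inside a `ℚ`-vector space `V`.  `pairing α β` is `⟨α^∨, β⟩`. -/
structure RootSystemData (V : Type*) [AddCommGroup V] [Module ℚ V] where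
  Φ : Set V
  finite : Φ.Finite
  pairing : V → Module.Dual ℚ V
  zero_not_mem : (0 : V) ∉ Φ
  neg_mem : ∀ α ∈ Φ, -α ∈ Φ
  pairing_self : ∀ α ∈ Φ, pairing α α = 2
  pairing_int : ∀ α ∈ Φ, ∀ β ∈ Φ, ∃ n : ℤ, pairing α β = (n : ℚ)
  reflect_mem : ∀ α ∈ Φ, ∀ β ∈ Φ, β - pairing α β • α ∈ Φ
  reduced : ∀ α ∈ Φ, ∀ c : ℚ, c • α ∈ Φ → c = 1 ∨ c = -1
  pos : Set V
  pos_sub : pos ⊆ Φ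
  mem_pos_or_neg : ∀ α ∈ Φ, α ∈ pos ∨ -α ∈ pos
  not_pos_and_neg : ∀ α ∈ pos, -α ∉ pos
  pos_add : ∀ α ∈ pos, ∀ β ∈ pos, α + β ∈ Φ → α + β ∈ pos

namespace RootSystemData

variable {V : Type*} [AddCommGroup V] [Module ℚ V] (R : RootSystemData V)

/-- The reflection `s_α` as a linear endomorphism of `V`. -/
noncomputable def refl (α : V) : Module.End ℚ V := 1 - (R.pairing α).smulRight α

/-- Indicator function `Φ⁺` of the positive roots. -/
noncomputable def ind (β : V) : ℤ := if β ∈ R.pos then 1 else 0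

/-- `2ρ`, the sum of the positive roots. -/
noncomputable def twoRho : V := ∑ᶠ α ∈ R.pos, α

/-- The length of a (Weyl group) element: the number of positive roots sent to
negative roots. -/
noncomputable def len (f : Module.End ℚ V) : ℕ := {α | α ∈ R.pos ∧ f α ∉ R.pos}.ncard

/-- `f` belongs to the Weyl group, i.e. is a product of reflections. -/
def IsWeyl (f : Module.End ℚ V) : Prop :=
  f ∈ Submonoid.closure {g : Module.End ℚ V | ∃ α ∈ R.pos, g = R.refl α}

/-- A quantum root: `ℓ(s_α) = ⟨α^∨, 2ρ⟩ - 1`. -/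
def IsQuantumRoot (α : V) : Prop :=
  α ∈ R.pos ∧ (R.len (R.refl α) : ℚ) = R.pairing α R.twoRho - 1

/-- Edges of the quantum Bruhat graph `QB(W)`, together with their weights:
a Bruhat edge `w → w s_α` of weight `0` when `ℓ(w s_α) = ℓ(w) + 1`, and a
quantum edge of weight `α^∨` when `ℓ(w s_α) = ℓ(w) + 1 - ⟨α^∨, 2ρ⟩`. -/
def Edge (u v : Module.End ℚ V) (ω : Module.Dual ℚ V) : Prop :=
  ∃ α ∈ R.pos, v = u * R.refl α ∧
    ((R.len v = R.len u + 1 ∧ ω = 0) ∨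
     ((R.len v : ℚ) = (R.len u : ℚ) + 1 - R.pairing α R.twoRho ∧ ω = R.pairing α))

/-- Paths in the quantum Bruhat graph; `Path R u v ω n` means there is a path
from `u` to `v` with `n` edges and total weight `ω`. -/
inductive Path (R : RootSystemData V) :
    Module.End ℚ V → Module.End ℚ V → Module.Dual ℚ V → ℕ → Prop
  | nil (u : Module.End ℚ V) : Path R u u 0 0
  | cons {u v w : Module.End ℚ V} {ω' ω : Module.Dual ℚ V} {n : ℕ} :
      R.Edge u v ω' → Path R v w ω n → Path R u w (ω' + ω) (n + 1)

/-- `ω` is the weight `wt(u ⇒ v)` of a shortest path from `u` to `v` in `QB(W)`. -/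
def IsWt (u v : Module.End ℚ V) (ω : Module.Dual ℚ V) : Prop :=
  ∃ n, R.Path u v ω n ∧ ∀ (m : ℕ) (ω' : Module.Dual ℚ V), R.Path u v ω' m → n ≤ m

/-- The distance `d(u ⇒ v)` in the quantum Bruhat graph. -/
noncomputable def qbDist (u v : Module.End ℚ V) : ℕ :=
  sInf {n | ∃ ω, R.Path u v ω n}

/-- The cone of nonnegative integral sums of positive coroots; `μ ≤ ν` in the
coroot lattice iff `ν - μ` lies in this cone. -/
def corootCone : AddSubmonoid (Module.Dual ℚ V) :=
  AddSubmonoid.closure {d | ∃ α ∈ R.pos, d = R.pairing α}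

/-- The coroot lattice `ℤΦ^∨`. -/
def corootLattice : AddSubgroup (Module.Dual ℚ V) :=
  AddSubgroup.closure {d | ∃ α ∈ R.pos, d = R.pairing α}

/-- The set of inversions of `w`, in terms of the inverse `winv` of `w`:
positive roots sent to negative roots by `w⁻¹`. -/
def inversions (winv : Module.End ℚ V) : Set V :=
  {α | α ∈ R.pos ∧ winv α ∉ R.pos}

/-- `γ` is a maximal inversion of `w`: no other inversion `α` satisfies that
`α - γ` is a (nonzero) sum of positive roots. -/
def IsMaxInv (winv : Module.End ℚ V) (γ : V) : Prop :=
  γ ∈ R.inversions winv ∧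
    ∀ α ∈ R.inversions winv, α ≠ γ → α - γ ∉ AddSubmonoid.closure R.pos

lemma neg_mem_pos_of_notMem {x : V} (hx : x ∈ R.Φ) (h : x ∉ R.pos) : -x ∈ R.pos :=
  (R.mem_pos_or_neg x hx).resolve_left h

lemma refl_apply (α x : V) : R.refl α x = x - R.pairing α x • α := by
  simp [refl]

lemma refl_mem {α x : V} (hα : α ∈ R.Φ) (hx : x ∈ R.Φ) : R.refl α x ∈ R.Φ := by
  rw [refl_apply]
  exact R.reflect_mem α hα x hx

lemma refl_refl {α : V} (hα : α ∈ R.Φ) (x : V) : R.refl α (R.refl α x) = x := by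
  simp only [refl_apply, map_sub, map_smul, R.pairing_self α hα]
  module

lemma refl_self {α : V} (hα : α ∈ R.Φ) : R.refl α α = -α := by
  rw [refl_apply, R.pairing_self α hα]
  module

lemma refl_injective {α : V} (hα : α ∈ R.Φ) : Function.Injective (R.refl α) :=
  Function.LeftInverse.injective (R.refl_refl hα)

variable {R} in
lemma IsWeyl.mapsTo {f : Module.End ℚ V} (hf : R.IsWeyl f) :
    Set.MapsTo f R.Φ R.Φ := by
  induction hf using Submonoid.closure_induction with
  | mem g hg =>
    obtain ⟨α, hα, rfl⟩ := hg
    exact fun x hx => R.refl_mem (R.pos_sub hα) hx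
  | one => exact Set.mapsTo_id _
  | mul f g _ _ hf hg => exact hf.comp hg

lemma mapsTo_of_leftInverse {w winv : Module.End ℚ V} (hw : Set.MapsTo w R.Φ R.Φ)
    (hinv : Function.LeftInverse winv w) : Set.MapsTo winv R.Φ R.Φ := by
  intro x hx
  have hbij := (R.finite.injOn_iff_bijOn_of_mapsTo hw).mp hinv.injective.injOn
  obtain ⟨y, hy, rfl⟩ := hbij.surjOn hx
  rwa [hinv]

lemma pos_finite : R.pos.Finite :=
  R.finite.subset R.pos_sub

lemma inversions_subset_pos (f : Module.End ℚ V) : R.inversions f ⊆ R.pos :=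
  fun _ hα => hα.1

lemma eq_zero_of_forall_add_nsmul_mem {x v : V} (h : ∀ n : ℕ, x + n • v ∈ R.Φ) : v = 0 := by
  by_contra hv
  refine R.finite.not_infinite (Set.infinite_of_injective_forall_mem ?_ h)
  intro m n hmn
  have : (m : ℚ) • v = (n : ℚ) • v := by
    simpa only [Nat.cast_smul_eq_nsmul] using add_left_cancel hmn
  exact_mod_cast smul_left_injective ℚ hv this

lemma pairing_refl {α δ z : V} (hα : α ∈ R.Φ) (hδ : δ ∈ R.Φ) (hz : z ∈ R.Φ) :
    R.pairing (R.refl α δ) z = R.pairing δ (R.refl α z) := by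
  set m := R.refl α δ
  have hm : m ∈ R.Φ := R.refl_mem hα hδ
  let d : Module.Dual ℚ V := R.pairing δ ∘ₗ R.refl α - R.pairing m
  have hdm : d m = 0 := by
    simp [d, m, R.refl_refl hα, R.pairing_self _ hδ, R.pairing_self _ hm]
  -- `s_m s_α s_δ s_α` preserves `Φ` and is the transvection `x ↦ x + d x • m` with `d m = 0`;
  -- its powers move `z` along a line, so finiteness of `Φ` forces `d z = 0`
  have hT : ∀ x, R.refl m (R.refl α (R.refl δ (R.refl α x))) = x + d x • m := by
    intro x
    have hconj : R.refl α (R.refl δ (R.refl α x)) = x - R.pairing δ (R.refl α x) • m := by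
      rw [R.refl_apply δ, map_sub, map_smul, R.refl_refl hα]
    rw [hconj, R.refl_apply m, map_sub, map_smul, R.pairing_self _ hm]
    simp only [d, LinearMap.sub_apply, LinearMap.comp_apply, smul_eq_mul]
    module
  have hiter : ∀ n : ℕ, z + n • (d z • m) ∈ R.Φ := by
    intro n
    induction n with
    | zero => simpa using hz
    | succ n ih =>
      have := R.refl_mem hm (R.refl_mem hα (R.refl_mem hδ (R.refl_mem hα ih)))
      rw [hT] at this
      simpa [hdm, succ_nsmul, add_assoc] using this
  have hdz : d z = 0 :=
    (smul_eq_zero.mp (R.eq_zero_of_forall_add_nsmul_mem hiter)).resolve_right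
      fun h => R.zero_not_mem (h ▸ hm)
  simp only [d, LinearMap.sub_apply, LinearMap.comp_apply, sub_eq_zero] at hdz
  exact hdz.symm

noncomputable def rootForm : LinearMap.BilinForm ℚ V :=
  ∑ δ ∈ R.finite.toFinset, (R.pairing δ).smulRight (R.pairing δ)

lemma rootForm_apply (x y : V) :
    R.rootForm x y = ∑ δ ∈ R.finite.toFinset, R.pairing δ x * R.pairing δ y := by
  simp [rootForm]

lemma rootForm_comm (x y : V) : R.rootForm x y = R.rootForm y x := by
  simp only [rootForm_apply, mul_comm]

lemma rootForm_self_nonneg (x : V) : 0 ≤ R.rootForm x x := by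
  rw [rootForm_apply]
  exact Finset.sum_nonneg fun δ _ => mul_self_nonneg _

lemma four_le_rootForm_self {α : V} (hα : α ∈ R.Φ) : 4 ≤ R.rootForm α α := by
  rw [rootForm_apply]
  have := Finset.single_le_sum (fun δ _ => mul_self_nonneg (R.pairing δ α))
    (R.finite.mem_toFinset.mpr hα)
  rw [R.pairing_self α hα] at this
  linarith

lemma rootForm_refl_refl {α x y : V} (hα : α ∈ R.Φ) (hx : x ∈ R.Φ) (hy : y ∈ R.Φ) :
    R.rootForm (R.refl α x) (R.refl α y) = R.rootForm x y := by
  simp only [rootForm_apply]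
  refine Finset.sum_nbij' (R.refl α) (R.refl α) ?_ ?_ (fun δ _ => R.refl_refl hα δ)
    (fun δ _ => R.refl_refl hα δ) fun δ hδ => ?_
  · intro δ hδ
    simpa using R.refl_mem hα (R.finite.mem_toFinset.mp hδ)
  · intro δ hδ
    simpa using R.refl_mem hα (R.finite.mem_toFinset.mp hδ)
  · have hδ := R.finite.mem_toFinset.mp hδ
    rw [R.pairing_refl hα hδ hx, R.pairing_refl hα hδ hy]

lemma two_mul_rootForm_eq {α x : V} (hα : α ∈ R.Φ) (hx : x ∈ R.Φ) :
    2 * R.rootForm α x = R.pairing α x * R.rootForm α α := by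
  have h := R.rootForm_refl_refl hα hα hx
  simp only [R.refl_self hα, R.refl_apply α x, map_neg, map_sub, map_smul,
    LinearMap.neg_apply, smul_eq_mul] at h
  linarith

lemma pairing_mul_pairing_le_four {α β : V} (hα : α ∈ R.Φ) (hβ : β ∈ R.Φ) :
    R.pairing α β * R.pairing β α ≤ 4 := by
  have hcs := R.rootForm.apply_mul_apply_le_of_forall_zero_le R.rootForm_self_nonneg α β
  have hαβ := R.two_mul_rootForm_eq hα hβ
  have hβα := R.two_mul_rootForm_eq hβ hα
  have hαα := R.four_le_rootForm_self hα
  have hββ := R.four_le_rootForm_self hβ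
  have hprod : 0 < R.rootForm α α * R.rootForm β β := by positivity
  have key : R.pairing α β * R.pairing β α * (R.rootForm α α * R.rootForm β β) =
      4 * (R.rootForm α β * R.rootForm β α) := by
    linear_combination (-2 * R.rootForm β α) * hαβ - (R.pairing α β * R.rootForm α α) * hβα
  refine le_of_mul_le_mul_right ?_ hprod
  rw [key]
  linarith

lemma pairing_pos_iff_rootForm_pos {α x : V} (hα : α ∈ R.Φ) (hx : x ∈ R.Φ) :
    0 < R.pairing α x ↔ 0 < R.rootForm α x := by
  have h := R.two_mul_rootForm_eq hα hx
  have hαα := R.four_le_rootForm_self hα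
  constructor <;> intro hpos <;> nlinarith

lemma eq_of_pairing_eq_two {α β : V} (hα : α ∈ R.Φ) (hβ : β ∈ R.Φ)
    (hαβ : R.pairing α β = 2) (hβα : R.pairing β α = 2) : α = β := by
  -- `s_α s_β` translates `α + ℕ • 2(α - β)` by `2(α - β)`
  have hiter : ∀ n : ℕ, α + n • (2 • (α - β)) ∈ R.Φ := by
    intro n
    induction n with
    | zero => simpa using hα
    | succ n ih =>
      convert R.refl_mem hα (R.refl_mem hβ ih) using 1
      simp only [refl_apply, map_add, map_sub, map_nsmul, map_smul, hαβ, hβα,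
        R.pairing_self α hα, R.pairing_self β hβ]
      module
  have h := R.eq_zero_of_forall_add_nsmul_mem hiter
  rw [← Nat.cast_smul_eq_nsmul ℚ, smul_eq_zero, sub_eq_zero] at h
  exact h.resolve_left (by norm_num)

lemma eq_or_sub_mem_of_rootForm_pos {α β : V} (hα : α ∈ R.Φ) (hβ : β ∈ R.Φ)
    (h : 0 < R.rootForm α β) : α = β ∨ α - β ∈ R.Φ := by
  obtain ⟨n, hn⟩ := R.pairing_int α hα β hβ
  obtain ⟨k, hk⟩ := R.pairing_int β hβ α hα
  have hn1 : 0 < n := by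
    exact_mod_cast hn ▸ (R.pairing_pos_iff_rootForm_pos hα hβ).mpr h
  have hk1 : 0 < k := by
    rw [rootForm_comm] at h
    exact_mod_cast hk ▸ (R.pairing_pos_iff_rootForm_pos hβ hα).mpr h
  have hnk : n * k ≤ 4 := by
    exact_mod_cast hn ▸ hk ▸ R.pairing_mul_pairing_le_four hα hβ
  by_cases hk_one : k = 1
  · right
    simpa [refl_apply, hk, hk_one] using R.refl_mem hβ hα
  by_cases hn_one : n = 1
  · right
    simpa [refl_apply, hn, hn_one] using R.neg_mem _ (R.refl_mem hα hβ)
  left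
  obtain ⟨rfl, rfl⟩ : n = 2 ∧ k = 2 := by
    have hn2 : 2 ≤ n := by omega
    have hk2 : 2 ≤ k := by omega
    constructor <;> nlinarith
  exact R.eq_of_pairing_eq_two hα hβ (by simp [hn]) (by simp [hk])

lemma sub_mem_of_pairing_pos {α β : V} (hα : α ∈ R.Φ) (hβ : β ∈ R.Φ) (hne : α ≠ β)
    (h : 0 < R.pairing β α) : α - β ∈ R.Φ := by
  rw [R.pairing_pos_iff_rootForm_pos hβ hα, rootForm_comm] at h
  exact (R.eq_or_sub_mem_of_rootForm_pos hα hβ h).resolve_left hne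

lemma add_mem_pos_of_rootForm_neg {α β : V} (hα : α ∈ R.pos) (hβ : β ∈ R.pos)
    (h : R.rootForm α β < 0) : α + β ∈ R.pos := by
  have hneg : 0 < R.rootForm α (-β) := by simpa using h
  rcases R.eq_or_sub_mem_of_rootForm_pos (R.pos_sub hα) (R.neg_mem β (R.pos_sub hβ)) hneg
    with heq | hmem
  · exact absurd (heq ▸ hα) (R.not_pos_and_neg β hβ)
  · exact R.pos_add α hα β hβ (by simpa using hmem)

/-- If `α + Σ s = 0`, applying `rootForm α` shows that some `β ∈ s` has `rootForm α β < 0`;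
then `α + β` is a positive root, and `s.erase β` is shorter. -/
lemma add_multiset_sum_ne_zero {α : V} (hα : α ∈ R.pos) (s : Multiset V)
    (hs : ∀ x ∈ s, x ∈ R.pos) : α + s.sum ≠ 0 := by
  intro h
  have hform : R.rootForm α α + (s.map (R.rootForm α)).sum = 0 := by
    simpa [map_multiset_sum] using congrArg (R.rootForm α) h
  obtain ⟨β, hβs, hneg⟩ : ∃ β ∈ s, R.rootForm α β < 0 := by
    by_contra! hnonneg
    have := Multiset.sum_nonneg (s := s.map (R.rootForm α)) (by simpa using hnonneg)
    linarith [R.four_le_rootForm_self (R.pos_sub hα)]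
  refine add_multiset_sum_ne_zero (R.add_mem_pos_of_rootForm_neg hα (hs β hβs) hneg)
    (s.erase β) (fun x hx => hs x (Multiset.mem_of_mem_erase hx)) ?_
  rw [add_assoc, Multiset.sum_erase hβs, h]
termination_by Multiset.card s
decreasing_by exact Multiset.card_erase_lt_of_mem hβs

lemma add_ne_zero_of_mem_closure {α x : V} (hα : α ∈ R.pos)
    (hx : x ∈ AddSubmonoid.closure R.pos) : α + x ≠ 0 := by
  obtain ⟨s, hs, rfl⟩ := AddSubmonoid.exists_multiset_of_mem_closure hx
  exact R.add_multiset_sum_ne_zero hα s hs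

lemma neg_mem_inversions {winv : Module.End ℚ V} {x : V} (hx : x ∈ R.Φ) (hxn : x ∉ R.pos)
    (hwx : winv x ∈ R.pos) : -x ∈ R.inversions winv :=
  ⟨R.neg_mem_pos_of_notMem hx hxn, by rw [map_neg]; exact R.not_pos_and_neg _ hwx⟩

lemma neg_refl_mem_inversions_refl {α β : V} (hβ : β ∈ R.Φ)
    (hα : α ∈ R.inversions (R.refl β)) : -R.refl β α ∈ R.inversions (R.refl β) :=
  R.neg_mem_inversions (R.refl_mem hβ (R.pos_sub hα.1)) hα.2
    (by rw [R.refl_refl hβ]; exact hα.1)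

lemma neg_refl_ne {α β : V} (hβ : β ∈ R.Φ) (hne : α ≠ β) : -R.refl β α ≠ β := by
  intro h
  apply hne
  rw [← R.refl_refl hβ α, neg_eq_iff_eq_neg.mp h, map_neg, R.refl_self hβ, neg_neg]

lemma pairing_neg_refl {β : V} (hβ : β ∈ R.Φ) (x : V) :
    R.pairing β (-R.refl β x) = R.pairing β x := by
  simp only [refl_apply, map_neg, map_sub, map_smul, R.pairing_self β hβ, smul_eq_mul]
  ring

lemma exists_pairing_eq_succ {α β : V} (hβ : β ∈ R.pos) (hα : α ∈ R.inversions (R.refl β)) :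
    ∃ k : ℕ, R.pairing β α = k + 1 := by
  obtain ⟨hαpos, hαn⟩ := hα
  obtain ⟨n, hn⟩ := R.pairing_int β (R.pos_sub hβ) α (R.pos_sub hαpos)
  by_cases hn0 : 0 < n
  · obtain ⟨k, hk⟩ := Int.eq_ofNat_of_zero_le (by omega : 0 ≤ n - 1)
    exact ⟨k, by rw [hn, show n = k + 1 by omega]; push_cast; rfl⟩
  -- otherwise `s_β α = α + m • β` with `m : ℕ` would be a negative root in the positive cone
  obtain ⟨m, hm⟩ := Int.eq_ofNat_of_zero_le (by omega : 0 ≤ -n)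
  have hneg := R.neg_mem_pos_of_notMem (R.refl_mem (R.pos_sub hβ) (R.pos_sub hαpos)) hαn
  refine absurd ?_ (R.add_ne_zero_of_mem_closure hneg (add_mem
    (AddSubmonoid.subset_closure hαpos) (nsmul_mem (AddSubmonoid.subset_closure hβ) m)))
  rw [refl_apply, hn, show n = -m by omega, ← Nat.cast_smul_eq_nsmul ℚ]
  push_cast
  module

lemma apply_add_apply_neg_refl {α β γ : V} (w : Module.End ℚ V) (hwβ : w β = -γ) {n : ℕ}
    (hn : R.pairing β α = n) : w α + w (-R.refl β α) + n • γ = 0 := by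
  rw [refl_apply, hn, map_neg, map_sub, map_smul, hwβ, ← Nat.cast_smul_eq_nsmul ℚ]
  module

section MaximalInversion

variable {R} {winv : Module.End ℚ V} {γ : V}

lemma IsMaxInv.notMem_pos_of_add_add_nsmul_eq_zero (hγ : R.IsMaxInv winv γ) {x y : V}
    (hy : y ∈ R.Φ) (hwy : winv y ∈ R.pos) {k : ℕ} (h : x + y + (k + 1) • γ = 0) :
    x ∉ R.pos := by
  intro hx
  have hγpos := hγ.1.1
  have hyγ : -y - γ = x + k • γ := by
    rw [← sub_eq_zero, ← neg_eq_zero, ← h]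
    module
  have hy' : y ∉ R.pos := fun hy' => R.add_ne_zero_of_mem_closure hx
    (add_mem (AddSubmonoid.subset_closure hy') (nsmul_mem (AddSubmonoid.subset_closure hγpos) _))
    (by rwa [← add_assoc])
  refine hγ.2 (-y) (R.neg_mem_inversions hy hy' hwy) (fun heq => ?_) ?_
  · exact R.add_ne_zero_of_mem_closure hx (nsmul_mem (AddSubmonoid.subset_closure hγpos) k)
      (by rw [← hyγ, heq, sub_self])
  · rw [hyγ]
    exact add_mem (AddSubmonoid.subset_closure hx)
      (nsmul_mem (AddSubmonoid.subset_closure hγpos) k)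

lemma IsMaxInv.add_mem_pos (hγ : R.IsMaxInv winv γ) {x : V} (hx : x ∈ R.Φ) (hxn : x ∉ R.pos)
    (hwx : winv x ∈ R.pos) (hxγ : x + γ ∈ R.Φ) : x + γ ∈ R.pos := by
  by_contra hn
  have hneg := R.neg_mem_pos_of_notMem hxγ hn
  refine hγ.2 (-x) (R.neg_mem_inversions hx hxn hwx) (fun heq => ?_) ?_
  · rw [neg_add, heq, add_neg_cancel] at hneg
    exact R.zero_not_mem (R.pos_sub hneg)
  · rw [show -x - γ = -(x + γ) by abel]
    exact AddSubmonoid.subset_closure hneg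

variable {w : Module.End ℚ V} {β : V}

lemma IsMaxInv.apply_notMem_pos (hγ : R.IsMaxInv winv γ) (hw : Set.MapsTo w R.Φ R.Φ)
    (hinv : Function.LeftInverse winv w) (hβ : β ∈ R.pos) (hwβ : w β = -γ) {α : V}
    (hα : α ∈ R.inversions (R.refl β)) : w α ∉ R.pos := by
  obtain ⟨k, hk⟩ := R.exists_pairing_eq_succ hβ hα
  have hα' := R.neg_refl_mem_inversions_refl (R.pos_sub hβ) hα
  exact hγ.notMem_pos_of_add_add_nsmul_eq_zero (hw (R.pos_sub hα'.1))
    (by rw [hinv]; exact hα'.1) (R.apply_add_apply_neg_refl w hwβ (by rw [hk]; push_cast; rfl))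

lemma IsMaxInv.pairing_eq_one (hγ : R.IsMaxInv winv γ) (hw : Set.MapsTo w R.Φ R.Φ)
    (hinv : Function.LeftInverse winv w) (hβ : β ∈ R.pos) (hwβ : w β = -γ) {α : V}
    (hα : α ∈ R.inversions (R.refl β)) (hne : α ≠ β) : R.pairing β α = 1 := by
  have hβΦ := R.pos_sub hβ
  obtain ⟨k, hk⟩ := R.exists_pairing_eq_succ hβ hα
  suffices k = 0 by simp [hk, this]
  by_contra hk0
  obtain ⟨j, rfl⟩ := Nat.exists_eq_add_one_of_ne_zero hk0
  -- for `δ ∈ {α, -s_β α}`, `w (δ - β) = w δ + γ` is a root, hence positive by maximality of `γ`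
  have hshift : ∀ δ ∈ R.inversions (R.refl β), δ ≠ β → R.pairing β δ = ↑(j + 1) + 1 →
      w δ + γ ∈ R.pos := by
    intro δ hδ hδne hδk
    have hδΦ := R.pos_sub hδ.1
    have hmem := hw (R.sub_mem_of_pairing_pos hδΦ hβΦ hδne (by rw [hδk]; positivity))
    rw [map_sub, hwβ, sub_neg_eq_add] at hmem
    exact hγ.add_mem_pos (hw hδΦ) (hγ.apply_notMem_pos hw hinv hβ hwβ hδ)
      (by rw [hinv]; exact hδ.1) hmem
  have hα' := hshift α hα hne hk
  have hα'' := hshift _ (R.neg_refl_mem_inversions_refl hβΦ hα) (R.neg_refl_ne hβΦ hne)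
    (by rw [R.pairing_neg_refl hβΦ, hk])
  have hsum := R.apply_add_apply_neg_refl (n := j + 2) w hwβ (by rw [hk]; push_cast; ring)
  refine R.add_ne_zero_of_mem_closure hα' (add_mem (AddSubmonoid.subset_closure hα'')
    (nsmul_mem (AddSubmonoid.subset_closure hγ.1.1) j)) ?_
  rw [← hsum]
  module

end MaximalInversion

lemma mapsTo_refl_pos_sdiff_inversions_refl {β : V} (hβ : β ∈ R.Φ) :
    Set.MapsTo (R.refl β) (R.pos \ R.inversions (R.refl β)) (R.pos \ R.inversions (R.refl β)) := by
  intro α ⟨hα, hαN⟩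
  have hsα : R.refl β α ∈ R.pos := by_contra fun h => hαN ⟨hα, h⟩
  exact ⟨hsα, fun h => h.2 (by rwa [R.refl_refl hβ])⟩

/-- Positive roots outside `inv(s_β)` are permuted by `s_β`, which negates `⟨β^∨, ·⟩`, so they
contribute nothing to `⟨β^∨, 2ρ⟩`. -/
lemma pairing_twoRho {β : V} (hβ : β ∈ R.Φ) :
    R.pairing β R.twoRho = ∑ᶠ α ∈ R.inversions (R.refl β), R.pairing β α := by
  set N := R.inversions (R.refl β)
  have hcancel : ∑ᶠ α ∈ R.pos \ N, R.pairing β α = 0 := by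
    have hmaps := R.mapsTo_refl_pos_sdiff_inversions_refl hβ
    have hinv : Set.InvOn (R.refl β) (R.refl β) (R.pos \ N) (R.pos \ N) :=
      ⟨fun α _ => R.refl_refl hβ α, fun α _ => R.refl_refl hβ α⟩
    have h := finsum_mem_eq_of_bijOn (g := fun α => -R.pairing β α) _ (hinv.bijOn hmaps hmaps)
      fun α _ => by rw [← map_neg, R.pairing_neg_refl hβ]
    rw [finsum_mem_neg_distrib _ R.pos_finite.sdiff] at h
    linarith
  calc R.pairing β R.twoRho = ∑ᶠ α ∈ R.pos, R.pairing β α :=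
        (R.pairing β).toAddMonoidHom.map_finsum_mem _ R.pos_finite
    _ = ∑ᶠ α ∈ N, R.pairing β α + ∑ᶠ α ∈ R.pos \ N, R.pairing β α :=
        (finsum_mem_add_sdiff (R.inversions_subset_pos _) R.pos_finite).symm
    _ = ∑ᶠ α ∈ N, R.pairing β α := by rw [hcancel, add_zero]

lemma isQuantumRoot_of_pairing_eq_one {β : V} (hβ : β ∈ R.pos)
    (h : ∀ α ∈ R.inversions (R.refl β), α ≠ β → R.pairing β α = 1) : R.IsQuantumRoot β := by
  have hβΦ := R.pos_sub hβ
  set N := R.inversions (R.refl β)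
  have hβN : β ∈ N := ⟨hβ, by rw [R.refl_self hβΦ]; exact R.not_pos_and_neg β hβ⟩
  have hNfin : N.Finite := R.pos_finite.subset (R.inversions_subset_pos _)
  have hsum := finsum_mem_add_sdiff (f := R.pairing β) (Set.singleton_subset_iff.mpr hβN) hNfin
  rw [finsum_mem_singleton, R.pairing_self β hβΦ,
    finsum_mem_congr rfl fun α hα => h α hα.1 hα.2] at hsum
  have hone : ∑ᶠ _ ∈ N \ {β}, (1 : ℚ) = ((N \ {β}).ncard : ℚ) := by
    rw [← finsum_one, Nat.cast_finsum_mem hNfin.sdiff, Nat.cast_one]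
  have hlen : R.len (R.refl β) = (N \ {β}).ncard + 1 :=
    (Set.ncard_sdiff_singleton_add_one hβN hNfin).symm
  refine ⟨hβ, ?_⟩
  rw [R.pairing_twoRho hβΦ, ← hsum, hone, hlen]
  push_cast
  ring

lemma image_refl_inversions_mul_refl {f : Module.End ℚ V} {β : V} (hf : Set.MapsTo f R.Φ R.Φ)
    (hβ : β ∈ R.Φ) (hsub : R.inversions (R.refl β) ⊆ R.inversions f) :
    R.refl β '' R.inversions (f * R.refl β) = R.inversions f \ R.inversions (R.refl β) := by
  ext α
  constructor
  · rintro ⟨α, ⟨hα, hfα⟩, rfl⟩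
    have hsα : R.refl β α ∈ R.pos := by
      by_contra hn
      have hneg := (hsub (R.neg_refl_mem_inversions_refl hβ ⟨hα, hn⟩)).2
      rw [map_neg] at hneg
      rcases R.mem_pos_or_neg _ (hf (R.refl_mem hβ (R.pos_sub hα))) with h | h
      exacts [hfα h, hneg h]
    exact ⟨⟨hsα, hfα⟩, fun h => h.2 (by rwa [R.refl_refl hβ])⟩
  · rintro ⟨⟨hα, hfα⟩, hαN⟩
    refine ⟨R.refl β α, ⟨by_contra fun h => hαN ⟨hα, h⟩, ?_⟩, R.refl_refl hβ α⟩
    rwa [Module.End.mul_apply, R.refl_refl hβ]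

lemma len_eq_len_mul_refl_add_len_refl {f : Module.End ℚ V} {β : V}
    (hf : Set.MapsTo f R.Φ R.Φ) (hβ : β ∈ R.Φ) (hsub : R.inversions (R.refl β) ⊆ R.inversions f) :
    R.len f = R.len (f * R.refl β) + R.len (R.refl β) := by
  have hfin : (R.inversions f).Finite := R.pos_finite.subset (R.inversions_subset_pos f)
  change (R.inversions f).ncard =
    (R.inversions (f * R.refl β)).ncard + (R.inversions (R.refl β)).ncard
  rw [← Set.ncard_image_of_injective (R.inversions (f * R.refl β)) (R.refl_injective hβ),
    R.image_refl_inversions_mul_refl hf hβ hsub, Set.ncard_sdiff_add_ncard_of_subset hsub hfin]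

/-- If `γ` is a maximal inversion of `w`, then `-w⁻¹γ` is a quantum root and
`ℓ(w s_{-w⁻¹γ}) = ℓ(w) - ℓ(s_{-w⁻¹γ})`, i.e. `w → s_γ w` is a quantum edge in
the quantum Bruhat graph. -/
theorem maxInv_quantum_edge (w winv : Module.End ℚ V) (hw : R.IsWeyl w)
    (h₁ : w * winv = 1) (h₂ : winv * w = 1) (γ : V) (hγ : R.IsMaxInv winv γ) :
    R.IsQuantumRoot (-(winv γ)) ∧
      R.len w = R.len (w * R.refl (-(winv γ))) + R.len (R.refl (-(winv γ))) := by
  have hwΦ := hw.mapsTo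
  have hinv : Function.LeftInverse winv w := LinearMap.congr_fun h₂
  have hβ : -winv γ ∈ R.pos :=
    R.neg_mem_pos_of_notMem (R.mapsTo_of_leftInverse hwΦ hinv (R.pos_sub hγ.1.1)) hγ.1.2
  have hwβ : w (-winv γ) = -γ := by
    rw [map_neg, ← Module.End.mul_apply, h₁, Module.End.one_apply]
  have hsub : R.inversions (R.refl (-winv γ)) ⊆ R.inversions w :=
    fun α hα => ⟨hα.1, hγ.apply_notMem_pos hwΦ hinv hβ hwβ hα⟩
  exact ⟨R.isQuantumRoot_of_pairing_eq_one hβ fun α hα hne =>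
      hγ.pairing_eq_one hwΦ hinv hβ hwβ hα hne,
    R.len_eq_len_mul_refl_add_len_refl hwΦ (R.pos_sub hβ) hsub⟩

end RootSystemData
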